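/- arXiv:1911.05467 — 2 statements merged into one kernel-verified Lean document; each statement's English description precedes it below -/
import Mathlib

section
/- There exists a constant C > 0 such that for every integer d ≥ 1, every integer n ≥ 1, and every real polynomial p in d variables of total degree at most n, there exists a σ₂-network Φ with input dimension d, output dimension 1, at most d·⌊log₂ n⌋ + d hidden layers, at most C·binom(n+d, d) neurons, and at most C·binom(n+d, d) nonzero weights, whose realization satisfies R(Φ)(x) = p(x) for all x ∈ ℝ^d. -/
open scoped Classical

noncomputable section

/-- Chebyshev polynomials of the first kind, as functions `ℝ → ℝ`:
`T 0 x = 1`, `T 1 x = x`, `T (n+2) x = 2x * T (n+1) x - T n x`. -/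
def chebT : ℕ → ℝ → ℝ
  | 0, _ => 1
  | 1, x => x
  | n + 2, x => 2 * x * chebT (n + 1) x - chebT n x

/-- Rectified power unit `σ_s(x) = max(0,x)^s`. -/
def repu (s : ℕ) (x : ℝ) : ℝ := (max 0 x) ^ s

/-- A feed-forward neural network with `L` layers: layer widths `width 0, …, width L`
(`width 0` is the input dimension, `width L` the output dimension), weight matrices
`A k` and bias vectors `b k` for `k = 1, …, L` (entries outside the relevant ranges
are irrelevant). -/
structure Net where
  L : ℕ
  width : ℕ → ℕ
  A : ℕ → ℕ → ℕ → ℝ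
  b : ℕ → ℕ → ℝ

namespace Net

/-- The state `x_k` of the network on input `x` with activation `σ`:
`x_0 = x`, `x_{k+1} = σ(A_{k+1} x_k + b_{k+1})` componentwise. -/
def fwd (σ : ℝ → ℝ) (Φ : Net) (x : ℕ → ℝ) : ℕ → ℕ → ℝ
  | 0 => x
  | k + 1 => fun i =>
      σ ((∑ j ∈ Finset.range (Φ.width k), Φ.A (k + 1) i j * Φ.fwd σ x k j) + Φ.b (k + 1) i)

/-- The realization `R(Φ)(x) = A_L x_{L-1} + b_L` (no activation on the last layer). -/
def realize (σ : ℝ → ℝ) (Φ : Net) (x : ℕ → ℝ) : ℕ → ℝ := fun i =>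
  (∑ j ∈ Finset.range (Φ.width (Φ.L - 1)), Φ.A Φ.L i j * Φ.fwd σ x (Φ.L - 1) j) + Φ.b Φ.L i

/-- Number of hidden layers. -/
def hiddenLayers (Φ : Net) : ℕ := Φ.L - 1

/-- Number of neurons (activation functions): total width of the hidden layers. -/
def neurons (Φ : Net) : ℕ := ∑ k ∈ Finset.Ico 1 Φ.L, Φ.width k

/-- Number of nonzero weights: nonzero entries of all the `A_k` and `b_k`. -/
def nonzeroWeights (Φ : Net) : ℕ :=
  ∑ k ∈ Finset.Icc 1 Φ.L,
    ((((Finset.range (Φ.width k)) ×ˢ (Finset.range (Φ.width (k - 1)))).filter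
        (fun p => Φ.A k p.1 p.2 ≠ 0)).card
      + ((Finset.range (Φ.width k)).filter (fun i => Φ.b k i ≠ 0)).card)

end Net

/-!
Since `σ₂(t) + σ₂(-t) = t²`, four `σ₂`-neurons reading two affine functions `u`, `v` of the
previous layer compute `((u + v)² - (u - v)²) / 4 = u v`, so it suffices to build a network of
such product units. A monomial of degree `e ≥ 2` is the product of two monomials of degrees
`⌈e/2⌉` and `⌊e/2⌋`; giving it the level `⌈log₂ e⌉`, its factors lie one or two levels lower.
Stage `s` therefore forms the monomials of level `s`, carries those of level `s - 1` once more,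
and adds the terms of level `s - 2` into an accumulator. Each monomial then occupies at most
two units and `O(1)` weights, and `⌈log₂ n⌉` stages suffice.
-/

open Finset

structure AffForm where
  coef : ℕ → ℝ
  const : ℝ

namespace AffForm

def eval (F : AffForm) (w : ℕ) (v : ℕ → ℝ) : ℝ := ∑ j ∈ range w, F.coef j * v j + F.const

def nnz (F : AffForm) (w : ℕ) : ℕ := #{j ∈ range w | F.coef j ≠ 0}

/-- The pre-activation `(-1)^r₀ (u + (-1)^r₁ v)` of neuron `r` of a product unit, where
`r = 2 r₁ + r₀`. -/
def neuron (r : ℕ) (u v : AffForm) : AffForm :=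
  ⟨fun j => (-1) ^ (r % 2) * (u.coef j + (-1) ^ (r / 2 % 2) * v.coef j),
    (-1) ^ (r % 2) * (u.const + (-1) ^ (r / 2 % 2) * v.const)⟩

/-- A form in the values of the product units of a hidden stage, rewritten as a form in its
neurons; stage `0` is the input layer, which has no product units. -/
def lift (k : ℕ) (F : AffForm) : AffForm :=
  if k = 0 then F else ⟨fun j => (-1) ^ (j / 2 % 2) * F.coef (j / 4) / 4, F.const⟩

lemma eval_neuron (r w : ℕ) (u v : AffForm) (x : ℕ → ℝ) :
    (neuron r u v).eval w x = (-1) ^ (r % 2) * (u.eval w x + (-1) ^ (r / 2 % 2) * v.eval w x) := by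
  simp only [eval, neuron, mul_add, add_mul, sum_add_distrib, mul_sum, mul_assoc]
  ring

lemma nnz_neuron_le (r w : ℕ) (u v : AffForm) :
    (neuron r u v).nnz w ≤ u.nnz w + v.nnz w := by
  unfold nnz
  refine (card_le_card fun j hj => ?_).trans (card_union_le _ _)
  rw [mem_filter] at hj
  rw [mem_union, mem_filter, mem_filter]
  by_contra! h
  exact hj.2 (by simp [neuron, h.1 hj.1, h.2 hj.1])

end AffForm

lemma sum_range_four_mul {M : Type*} [AddCommMonoid M] (m : ℕ) (f : ℕ → M) :
    ∑ j ∈ range (4 * m), f j = ∑ q ∈ range m, ∑ r ∈ range 4, f (4 * q + r) := by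
  induction m with
  | zero => simp
  | succ m ih => rw [mul_add, mul_one, sum_range_add, ih, sum_range_succ _ m]

lemma repu_two_add_repu_two_neg (t : ℝ) : repu 2 t + repu 2 (-t) = t ^ 2 := by
  rcases le_total t 0 with h | h
  · simp [repu, h]
  · simp [repu, h]

lemma sum_repu_two_neuron (a b : ℝ) :
    ∑ r ∈ range 4, (-1) ^ (r / 2 % 2) * repu 2 ((-1) ^ (r % 2) * (a + (-1) ^ (r / 2 % 2) * b))
      = 4 * (a * b) := by
  have h₁ := repu_two_add_repu_two_neg (a + b)
  have h₂ := repu_two_add_repu_two_neg (a - b)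
  simp only [sum_range_succ, sum_range_zero]
  norm_num
  rw [show -b + -a = -(a + b) by ring, show a + -b = a - b by ring, show b + -a = -(a - b) by ring]
  linear_combination h₁ - h₂

lemma Net.layerWeights_le (Φ : Net) (k : ℕ) :
    ((range (Φ.width k) ×ˢ range (Φ.width (k - 1))).filter fun p => Φ.A k p.1 p.2 ≠ 0).card
        + ((range (Φ.width k)).filter fun i => Φ.b k i ≠ 0).card
      ≤ ∑ i ∈ range (Φ.width k), (#{j ∈ range (Φ.width (k - 1)) | Φ.A k i j ≠ 0} + 1) := by
  rw [sum_add_distrib, card_filter, sum_product]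
  simp only [← card_filter, sum_const, card_range, smul_eq_mul, mul_one]
  exact Nat.add_le_add_left ((card_filter_le _ _).trans (card_range _).le) _

/-- A network of product units: stage `0` is the input, of dimension `size 0`, and unit `q` of
stage `s + 1` multiplies the two forms `factors (s + 1) q` in the values of stage `s`. -/
structure ProductNet where
  depth : ℕ
  size : ℕ → ℕ
  factors : ℕ → ℕ → AffForm × AffForm
  out : AffForm

namespace ProductNet

variable (P : ProductNet)

def val (x : ℕ → ℝ) : ℕ → ℕ → ℝ
  | 0 => x
  | s + 1 => fun q => (P.factors (s + 1) q).1.eval (P.size s) (val x s) *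
      (P.factors (s + 1) q).2.eval (P.size s) (val x s)

def width (k : ℕ) : ℕ := if k = 0 then P.size 0 else if k ≤ P.depth then 4 * P.size k else 1

def row (k i : ℕ) : AffForm :=
  if k = P.depth + 1 then P.out.lift P.depth
  else AffForm.neuron i ((P.factors k (i / 4)).1.lift (k - 1))
    ((P.factors k (i / 4)).2.lift (k - 1))

/-- Unit `q` of a hidden stage becomes the four `σ₂`-neurons `4q, …, 4q + 3`. -/
def toNet : Net where
  L := P.depth + 1
  width := P.width
  A k i j := (P.row k i).coef j
  b k i := (P.row k i).const

def cost : ℕ :=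
  ∑ s ∈ range P.depth, ∑ q ∈ range (P.size (s + 1)),
      ((P.factors (s + 1) q).1.nnz (P.size s) + (P.factors (s + 1) q).2.nnz (P.size s) + 1)
    + P.out.nnz (P.size P.depth) + 1

lemma val_succ (x : ℕ → ℝ) (s q : ℕ) :
    P.val x (s + 1) q = (P.factors (s + 1) q).1.eval (P.size s) (P.val x s) *
      (P.factors (s + 1) q).2.eval (P.size s) (P.val x s) := rfl

lemma width_hidden {k : ℕ} (hk₀ : k ≠ 0) (hk : k ≤ P.depth) : P.width k = 4 * P.size k := by
  simp [width, hk₀, hk]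

lemma hiddenLayers_toNet : P.toNet.hiddenLayers = P.depth := rfl

lemma width_toNet_zero : P.toNet.width 0 = P.size 0 := by
  simp [toNet, width]

lemma width_depth_succ : P.width (P.depth + 1) = 1 := by
  simp [width]

lemma fwd_succ (x : ℕ → ℝ) (k i : ℕ) :
    P.toNet.fwd (repu 2) x (k + 1) i
      = repu 2 ((P.row (k + 1) i).eval (P.width k) (P.toNet.fwd (repu 2) x k)) := rfl

lemma eval_lift_fwd (x : ℕ → ℝ) {s : ℕ} (hs : s ≤ P.depth) (F : AffForm) :
    (F.lift s).eval (P.width s) (P.toNet.fwd (repu 2) x s) = F.eval (P.size s) (P.val x s) := by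
  induction s generalizing F with
  | zero => simp [AffForm.lift, width]; rfl
  | succ s ih =>
    have hneuron : ∀ q, ∀ r < 4, P.toNet.fwd (repu 2) x (s + 1) (4 * q + r) =
        repu 2 ((-1) ^ (r % 2) * ((P.factors (s + 1) q).1.eval (P.size s) (P.val x s)
          + (-1) ^ (r / 2 % 2) * (P.factors (s + 1) q).2.eval (P.size s) (P.val x s))) := by
      intro q r hr
      rw [fwd_succ, row, if_neg (by omega), AffForm.eval_neuron]
      simp only [show (4 * q + r) / 4 = q by omega, show (4 * q + r) % 2 = r % 2 by omega,
        show (4 * q + r) / 2 % 2 = r / 2 % 2 by omega, Nat.add_sub_cancel]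
      rw [ih (by omega), ih (by omega)]
    rw [P.width_hidden (by omega) hs, AffForm.lift, if_neg (by omega)]
    simp only [AffForm.eval, sum_range_four_mul]
    congr 1
    refine sum_congr rfl fun q _ => ?_
    calc ∑ r ∈ range 4, (-1) ^ ((4 * q + r) / 2 % 2) * F.coef ((4 * q + r) / 4) / 4
          * P.toNet.fwd (repu 2) x (s + 1) (4 * q + r)
        = F.coef q / 4 * ∑ r ∈ range 4, (-1) ^ (r / 2 % 2) * repu 2 ((-1) ^ (r % 2)
            * ((P.factors (s + 1) q).1.eval (P.size s) (P.val x s)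
              + (-1) ^ (r / 2 % 2) * (P.factors (s + 1) q).2.eval (P.size s) (P.val x s))) := by
          rw [mul_sum]
          refine sum_congr rfl fun r hr => ?_
          have hr : r < 4 := mem_range.mp hr
          rw [hneuron q r hr, show (4 * q + r) / 4 = q by omega,
            show (4 * q + r) / 2 % 2 = r / 2 % 2 by omega]
          ring
      _ = F.coef q * P.val x (s + 1) q := by
          rw [sum_repu_two_neuron, val_succ]
          ring

lemma realize_toNet (x : ℕ → ℝ) :
    P.toNet.realize (repu 2) x 0 = P.out.eval (P.size P.depth) (P.val x P.depth) := by
  rw [← P.eval_lift_fwd x le_rfl P.out]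
  show (P.row (P.depth + 1) 0).eval (P.width (P.depth + 1 - 1))
    (P.toNet.fwd (repu 2) x (P.depth + 1 - 1)) = _
  rw [Nat.add_sub_cancel, row, if_pos rfl]

lemma neurons_toNet_le : P.toNet.neurons ≤ 4 * P.cost := by
  have h : P.toNet.neurons = ∑ s ∈ range P.depth, 4 * P.size (s + 1) := by
    rw [Net.neurons, show P.toNet.L = P.depth + 1 from rfl, sum_Ico_eq_sum_range,
      Nat.add_sub_cancel]
    refine sum_congr rfl fun s hs => ?_
    rw [add_comm]
    exact P.width_hidden (by omega) (mem_range.mp hs)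
  have hsize : ∀ s, P.size (s + 1) ≤ ∑ q ∈ range (P.size (s + 1)),
      ((P.factors (s + 1) q).1.nnz (P.size s) + (P.factors (s + 1) q).2.nnz (P.size s) + 1) :=
    fun s => by simpa using sum_le_sum fun q (_ : q ∈ range (P.size (s + 1))) => Nat.le_add_left 1 _
  rw [h, cost, ← mul_sum]
  have := sum_le_sum fun s (_ : s ∈ range P.depth) => hsize s
  omega

lemma nnz_lift_le {s : ℕ} (hs : s ≤ P.depth) (F : AffForm) :
    (F.lift s).nnz (P.width s) ≤ 4 * F.nnz (P.size s) := by
  rcases Nat.eq_zero_or_pos s with rfl | hs₀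
  · simp [AffForm.lift, width]
    omega
  rw [P.width_hidden (by omega) hs, AffForm.lift, if_neg (by omega), AffForm.nnz, AffForm.nnz]
  calc #{j ∈ range (4 * P.size s) | (-1) ^ (j / 2 % 2) * F.coef (j / 4) / 4 ≠ 0}
      ≤ #{j ∈ range (4 * P.size s) | F.coef (j / 4) ≠ 0} :=
        card_le_card (monotone_filter_right _ fun j hj => by simp_all)
    _ = 4 * #{q ∈ range (P.size s) | F.coef q ≠ 0} := by
        rw [card_filter, card_filter, sum_range_four_mul, mul_sum]
        refine sum_congr rfl fun q _ => ?_
        simp [show ∀ r < 4, (4 * q + r) / 4 = q by omega, sum_range_succ]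
        split_ifs <;> rfl

lemma nnz_row_le {s : ℕ} (hs : s < P.depth) (i : ℕ) :
    (P.row (s + 1) i).nnz (P.width s) ≤ 4 * ((P.factors (s + 1) (i / 4)).1.nnz (P.size s)
      + (P.factors (s + 1) (i / 4)).2.nnz (P.size s)) := by
  rw [row, if_neg (by omega), Nat.add_sub_cancel, mul_add]
  exact (AffForm.nnz_neuron_le _ _ _ _).trans
    (add_le_add (P.nnz_lift_le hs.le _) (P.nnz_lift_le hs.le _))

lemma sum_nnz_row_le {s : ℕ} (hs : s < P.depth) :
    ∑ i ∈ range (P.width (s + 1)), ((P.row (s + 1) i).nnz (P.width s) + 1)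
      ≤ 16 * ∑ q ∈ range (P.size (s + 1)), ((P.factors (s + 1) q).1.nnz (P.size s)
        + (P.factors (s + 1) q).2.nnz (P.size s) + 1) := by
  rw [P.width_hidden (by omega) hs, sum_range_four_mul, mul_sum]
  refine sum_le_sum fun q _ => ?_
  have h : ∀ r < 4, (P.row (s + 1) (4 * q + r)).nnz (P.width s) ≤ 4 * ((P.factors (s + 1) q).1.nnz
      (P.size s) + (P.factors (s + 1) q).2.nnz (P.size s)) := fun r hr => by
    simpa [show (4 * q + r) / 4 = q by omega] using P.nnz_row_le hs (4 * q + r)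
  have := h 0 (by norm_num); have := h 1 (by norm_num)
  have := h 2 (by norm_num); have := h 3 (by norm_num)
  simp only [sum_range_succ, sum_range_zero]
  omega

lemma layerWeights_hidden_le {s : ℕ} (hs : s < P.depth) :
    ((range (P.toNet.width (s + 1)) ×ˢ range (P.toNet.width s)).filter
        fun p => P.toNet.A (s + 1) p.1 p.2 ≠ 0).card
      + ((range (P.toNet.width (s + 1))).filter fun i => P.toNet.b (s + 1) i ≠ 0).card
      ≤ 16 * ∑ q ∈ range (P.size (s + 1)), ((P.factors (s + 1) q).1.nnz (P.size s)
        + (P.factors (s + 1) q).2.nnz (P.size s) + 1) :=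
  (P.toNet.layerWeights_le (s + 1)).trans (P.sum_nnz_row_le hs)

lemma layerWeights_output_le :
    ((range (P.toNet.width (P.depth + 1)) ×ˢ range (P.toNet.width P.depth)).filter
        fun p => P.toNet.A (P.depth + 1) p.1 p.2 ≠ 0).card
      + ((range (P.toNet.width (P.depth + 1))).filter fun i => P.toNet.b (P.depth + 1) i ≠ 0).card
      ≤ 4 * P.out.nnz (P.size P.depth) + 1 := by
  refine (P.toNet.layerWeights_le (P.depth + 1)).trans ?_
  show ∑ i ∈ range (P.width (P.depth + 1)), ((P.row (P.depth + 1) i).nnz (P.width P.depth) + 1) ≤ _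
  rw [P.width_depth_succ, sum_range_one, row, if_pos rfl]
  exact Nat.add_le_add_right (P.nnz_lift_le le_rfl _) 1

lemma nonzeroWeights_toNet_le : P.toNet.nonzeroWeights ≤ 16 * P.cost := by
  rw [Net.nonzeroWeights, show P.toNet.L = P.depth + 1 from rfl, ← Ico_add_one_right_eq_Icc,
    sum_Ico_eq_sum_range, Nat.add_sub_cancel, sum_range_succ]
  simp only [add_comm 1, Nat.add_sub_cancel]
  have hidden := sum_le_sum fun s hs => P.layerWeights_hidden_le (mem_range.mp hs)
  have output := P.layerWeights_output_le
  rw [← mul_sum] at hidden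
  rw [cost]
  omega

end ProductNet

lemma sum_card_filter_le {ι κ : Type*} (K : Finset ι) (M : Finset κ) (P : ι → κ → Prop)
    [∀ i a, Decidable (P i a)] {m : ℕ} (h : ∀ a ∈ M, #{k ∈ K | P k a} ≤ m) :
    ∑ k ∈ K, #{a ∈ M | P k a} ≤ #M * m := by
  refine le_trans ?_ (M.sum_le_card_nsmul _ _ h)
  simp_rw [card_eq_sum_ones, sum_filter]
  exact sum_comm.le

lemma Nat.clog_succ_le {b m : ℕ} (hb : 1 < b) (hm : m ≠ 0) :
    Nat.clog b (m + 1) ≤ Nat.clog b m + 1 := by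
  rw [Nat.clog_le_iff_le_pow hb, pow_succ]
  have h₁ := Nat.mul_le_mul_right b (Nat.le_pow_clog hb m)
  have h₂ : m + 1 ≤ m * b := by nlinarith [Nat.pos_of_ne_zero hm]
  omega

lemma Nat.clog_le_log_add_one {b : ℕ} (hb : 1 < b) (n : ℕ) : Nat.clog b n ≤ Nat.log b n + 1 :=
  (Nat.clog_le_iff_le_pow hb).mpr (Nat.lt_pow_succ_log_self hb n).le

lemma Nat.clog_two_le_clog_two_div_two_add_two {e : ℕ} (he : 2 ≤ e) :
    Nat.clog 2 e ≤ Nat.clog 2 (e / 2) + 2 := by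
  rw [Nat.clog_of_two_le (by norm_num) he]
  have := Nat.clog_mono_right 2 (show (e + 2 - 1) / 2 ≤ e / 2 + 1 by omega)
  have := Nat.clog_succ_le (b := 2) (by norm_num) (show e / 2 ≠ 0 by omega)
  omega

lemma List.sum_range_getD {α M : Type*} [AddCommMonoid M] (l : List α) (a : α) (f : α → M) :
    ∑ q ∈ Finset.range l.length, f (l.getD q a) = (l.map f).sum := by
  rw [Finset.sum_range, ← Fin.sum_univ_fun_getElem]
  exact Finset.sum_congr rfl fun q _ => by rw [getD_eq_getElem]

namespace Finsupp

variable {σ : Type*}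

lemma degree_eq_one {α : σ →₀ ℕ} (h : α.degree = 1) : ∃ i, α = single i 1 := by
  obtain ⟨i, hi⟩ := Multiset.card_eq_one.mp ((card_toMultiset α).trans h)
  refine ⟨i, ?_⟩
  rw [← toMultiset_toFinsupp α, hi, Multiset.toFinsupp_singleton]

noncomputable def half (α : σ →₀ ℕ) : σ →₀ ℕ :=
  (exists_le_degree_eq α ((α.degree + 1) / 2) (by omega)).choose

lemma half_le (α : σ →₀ ℕ) : half α ≤ α :=
  (exists_le_degree_eq α _ (by omega)).choose_spec.1

lemma degree_half (α : σ →₀ ℕ) : (half α).degree = (α.degree + 1) / 2 :=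
  (exists_le_degree_eq α _ (by omega)).choose_spec.2

lemma degree_sub_half (α : σ →₀ ℕ) : (α - half α).degree = α.degree / 2 := by
  have h := congrArg degree (add_tsub_cancel_of_le (half_le α))
  rw [map_add, degree_half] at h
  omega

end Finsupp

namespace PolyNet

open Finsupp (single degree linearCombination)

def monomials (d n : ℕ) : Finset (Fin d →₀ ℕ) :=
  (Icc 1 n).biUnion fun k => univ.finsuppAntidiag k

lemma mem_monomials {d n : ℕ} {α : Fin d →₀ ℕ} :
    α ∈ monomials d n ↔ 0 < degree α ∧ degree α ≤ n := by
  simp only [monomials, mem_biUnion, mem_Icc, mem_finsuppAntidiag, subset_univ, and_true,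
    ← Finsupp.degree_eq_sum]
  constructor
  · rintro ⟨k, hk, rfl⟩; omega
  · intro h; exact ⟨_, by omega, rfl⟩

lemma card_monomials_le (d n : ℕ) : #(monomials d n) ≤ (n + d).choose d :=
  calc #(monomials d n)
      ≤ ∑ k ∈ Icc 1 n, #(univ.finsuppAntidiag k : Finset (Fin d →₀ ℕ)) := card_biUnion_le
    _ = ∑ k ∈ Icc 1 n, d.multichoose k := by simp [card_finsuppAntidiag_nat_eq_multichoose]
    _ ≤ ∑ k ∈ range (n + 1), d.multichoose k :=
        sum_le_sum_of_subset fun k hk => by simp only [mem_Icc, mem_range] at hk ⊢; omega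
    _ = (n + d).choose d := Nat.sum_range_multichoose n d

def monomialEval {d : ℕ} (x : ℕ → ℝ) (α : Fin d →₀ ℕ) : ℝ := α.prod fun i k => x i ^ k

lemma monomialEval_add {d : ℕ} (x : ℕ → ℝ) (α β : Fin d →₀ ℕ) :
    monomialEval x (α + β) = monomialEval x α * monomialEval x β :=
  Finsupp.prod_add_index' (fun _ => pow_zero _) fun _ _ _ => pow_add _ _ _

lemma eval_eq_sum_monomials {d n : ℕ} (p : MvPolynomial (Fin d) ℝ) (hp : p.totalDegree ≤ n)
    (x : ℕ → ℝ) : MvPolynomial.eval (fun i : Fin d => x i) p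
      = p.coeff 0 + ∑ α ∈ monomials d n, p.coeff α * monomialEval x α := by
  have hsub : p.support ⊆ insert 0 (monomials d n) := fun α hα => by
    have := MvPolynomial.le_totalDegree hα
    rw [mem_insert, mem_monomials, or_iff_not_imp_left, ← Finsupp.degree_eq_zero_iff]
    exact fun h => ⟨Nat.pos_of_ne_zero h, this.trans hp⟩
  rw [MvPolynomial.eval_eq, sum_subset hsub fun α _ hα => by
      rw [MvPolynomial.notMem_support_iff.mp hα, zero_mul],
    sum_insert fun h => by simp [mem_monomials] at h]
  congr 1
  simp

def level {d : ℕ} (α : Fin d →₀ ℕ) : ℕ := Nat.clog 2 (degree α)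

/-- The monomials present at stage `s`: those of level `s`, formed there, and those of level
`s - 1`, carried over for one more stage. -/
def stage (d n s : ℕ) : Finset (Fin d →₀ ℕ) :=
  {α ∈ monomials d n | level α ≤ s ∧ s ≤ level α + 1}

lemma mem_stage {d n s : ℕ} {α : Fin d →₀ ℕ} :
    α ∈ stage d n s ↔ α ∈ monomials d n ∧ level α ≤ s ∧ s ≤ level α + 1 :=
  mem_filter

lemma half_mem_stage {d n s : ℕ} {α : Fin d →₀ ℕ} (hα : α ∈ monomials d n)
    (hl : level α = s + 1) : α.half ∈ stage d n s ∧ α - α.half ∈ stage d n s := by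
  rw [mem_monomials] at hα
  rw [level] at hl
  have he : 2 ≤ degree α := by
    by_contra h
    rw [Nat.clog_of_right_le_one (by omega)] at hl
    omega
  have h₁ := Nat.clog_of_two_le (b := 2) (by norm_num) he
  rw [show (degree α + 2 - 1) / 2 = (degree α + 1) / 2 by omega] at h₁
  have h₂ := Nat.clog_two_le_clog_two_div_two_add_two he
  have h₃ := Nat.clog_mono_right 2 (show degree α / 2 ≤ (degree α + 1) / 2 by omega)
  simp only [mem_stage, mem_monomials, level, Finsupp.degree_half,
    Finsupp.degree_sub_half]
  refine ⟨⟨⟨?_, ?_⟩, ?_, ?_⟩, ⟨?_, ?_⟩, ?_, ?_⟩ <;> omega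

inductive Node (d : ℕ)
  | acc
  | mono (α : Fin d →₀ ℕ)

section Program

variable (d n : ℕ) (c : (Fin d →₀ ℕ) → ℝ) (x : ℕ → ℝ)

/-- Stage `0` is the input layer, so it must list the coordinates `x_j` in order. -/
def nodes : ℕ → List (Node d)
  | 0 => List.ofFn fun j => .mono (single j 1)
  | s + 1 => .acc :: (stage d n (s + 1)).toList.map .mono

/-- The accumulator holds the terms whose monomials are no longer present. -/
def nodeValue (s : ℕ) : Node d → ℝ
  | .acc => ∑ α ∈ monomials d n with level α + 2 ≤ s, c α * monomialEval x α
  | .mono α => monomialEval x α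

/-- Nodes absent from stage `s` are read as `0`; the only such node ever read is the
accumulator at stage `0`, whose value is `0` anyway. -/
def seenValue (s : ℕ) (t : Node d) : ℝ := if t ∈ nodes d n s then nodeValue d n c x s t else 0

def symEval (s : ℕ) (G : (Node d →₀ ℝ) × ℝ) : ℝ :=
  linearCombination ℝ (seenValue d n c x s) G.1 + G.2

def toAff (s : ℕ) (G : (Node d →₀ ℝ) × ℝ) : AffForm :=
  ⟨fun j => G.1 ((nodes d n s).getD j .acc), G.2⟩

variable {d}

def accForm (F : Finset (Fin d →₀ ℕ)) : Node d →₀ ℝ :=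
  single .acc 1 + ∑ α ∈ F, c α • single (.mono α) 1

variable (d)

/-- The two factors of a node of stage `s + 1`, as symbolic forms in the nodes of stage `s`. -/
def recipe (s : ℕ) : Node d → ((Node d →₀ ℝ) × ℝ) × ((Node d →₀ ℝ) × ℝ)
  | .acc => ((accForm c {α ∈ monomials d n | level α + 1 = s}, 0), (0, 1))
  | .mono α =>
    if level α = s + 1 then ((single (.mono α.half) 1, 0), (single (.mono (α - α.half)) 1, 0))
    else ((single (.mono α) 1, 0), (0, 1))

def recipeCost (s : ℕ) (t : Node d) : ℕ :=
  #(recipe d n c s t).1.1.support + #(recipe d n c s t).2.1.support + 1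

def prog (c₀ : ℝ) : ProductNet where
  depth := Nat.clog 2 n
  size s := (nodes d n s).length
  factors s q := Prod.map (toAff d n (s - 1)) (toAff d n (s - 1))
    (recipe d n c (s - 1) ((nodes d n s).getD q .acc))
  out := toAff d n (Nat.clog 2 n) (accForm c (stage d n (Nat.clog 2 n)), c₀)

variable {d n}

lemma nodes_nodup (s : ℕ) : (nodes d n s).Nodup := by
  cases s with
  | zero =>
    exact List.nodup_ofFn.mpr fun i j h =>
      Finsupp.single_left_injective one_ne_zero (Node.mono.inj h)
  | succ s =>
    exact List.nodup_cons.mpr ⟨by simp, (nodup_toList _).map fun _ _ h => Node.mono.inj h⟩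

lemma length_nodes_zero : (nodes d n 0).length = d := by
  simp [nodes]

lemma mono_mem_nodes {s : ℕ} {α : Fin d →₀ ℕ} (h : α ∈ stage d n s) : .mono α ∈ nodes d n s := by
  cases s with
  | zero =>
    obtain ⟨hα, hl, -⟩ := mem_stage.mp h
    have h₁ : degree α = 1 := by
      have := (mem_monomials.mp hα).1
      by_contra h₁
      have := Nat.clog_pos (b := 2) (by norm_num) (show 1 < degree α by omega)
      rw [level] at hl
      omega
    obtain ⟨i, rfl⟩ := Finsupp.degree_eq_one h₁
    simp [nodes, List.mem_ofFn]
  | succ s => simpa [nodes] using h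

lemma mono_mem_nodes_succ {s : ℕ} {α : Fin d →₀ ℕ} :
    .mono α ∈ nodes d n (s + 1) ↔ α ∈ stage d n (s + 1) := by
  simp [nodes]

lemma seenValue_mono {s : ℕ} {α : Fin d →₀ ℕ} (h : α ∈ stage d n s) :
    seenValue d n c x s (.mono α) = monomialEval x α := by
  simp [seenValue, mono_mem_nodes h, nodeValue]

lemma seenValue_acc (s : ℕ) : seenValue d n c x s .acc = nodeValue d n c x s .acc := by
  cases s with
  | zero => simp [seenValue, nodes, nodeValue]
  | succ s => simp [seenValue, nodes]

lemma linearCombination_accForm (v : Node d → ℝ) (F : Finset (Fin d →₀ ℕ)) :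
    linearCombination ℝ v (accForm c F) = v .acc + ∑ α ∈ F, c α * v (.mono α) := by
  simp [accForm, map_sum]

lemma symEval_recipe {s : ℕ} {t : Node d} (ht : t ∈ nodes d n (s + 1)) :
    symEval d n c x s (recipe d n c s t).1 * symEval d n c x s (recipe d n c s t).2
      = nodeValue d n c x (s + 1) t := by
  cases t with
  | acc =>
    have hsplit : {α ∈ monomials d n | level α + 2 ≤ s + 1}
        = {α ∈ monomials d n | level α + 2 ≤ s} ∪ {α ∈ monomials d n | level α + 1 = s} := by
      ext α
      simp only [mem_union, mem_filter, ← and_or_left]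
      exact and_congr_right fun _ => by omega
    simp only [symEval, recipe, linearCombination_accForm, seenValue_acc, map_zero, add_zero,
      zero_add, mul_one, nodeValue]
    rw [hsplit, sum_union (disjoint_filter.mpr fun _ _ h₁ h₂ => by omega)]
    congr 1
    refine sum_congr rfl fun α hα => ?_
    rw [mem_filter] at hα
    rw [seenValue_mono _ _ (mem_stage.mpr ⟨hα.1, by omega, by omega⟩)]
  | mono α =>
    obtain ⟨hα, hl₁, hl₂⟩ := mem_stage.mp (mono_mem_nodes_succ.mp ht)
    simp only [symEval, recipe, nodeValue]
    split_ifs with h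
    · obtain ⟨h₁, h₂⟩ := half_mem_stage hα h
      simp only [Finsupp.linearCombination_single, seenValue_mono _ _ h₁, seenValue_mono _ _ h₂,
        one_smul, add_zero]
      rw [← monomialEval_add, add_tsub_cancel_of_le α.half_le]
    · have hs : α ∈ stage d n s := mem_stage.mpr ⟨hα, by omega, by omega⟩
      simp [seenValue_mono _ _ hs]

lemma eval_toAff {s : ℕ} {v : ℕ → ℝ}
    (hv : ∀ j (hj : j < (nodes d n s).length), v j = nodeValue d n c x s (nodes d n s)[j])
    (G : (Node d →₀ ℝ) × ℝ) :
    (toAff d n s G).eval (nodes d n s).length v = symEval d n c x s G := by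
  have hsum : ∑ j ∈ range (nodes d n s).length, G.1 ((nodes d n s).getD j .acc) * v j
      = ∑ t ∈ (nodes d n s).toFinset, G.1 t * nodeValue d n c x s t := by
    rw [List.sum_toFinset _ (nodes_nodup s), ← List.sum_range_getD _ Node.acc]
    refine sum_congr rfl fun j hj => ?_
    rw [List.getD_eq_getElem _ _ (mem_range.mp hj), hv j (mem_range.mp hj)]
  rw [AffForm.eval, symEval, Finsupp.linearCombination_apply, Finsupp.sum]
  simp only [toAff, hsum, smul_eq_mul]
  congr 1
  calc ∑ t ∈ (nodes d n s).toFinset, G.1 t * nodeValue d n c x s t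
      = ∑ t ∈ (nodes d n s).toFinset, G.1 t * seenValue d n c x s t :=
        sum_congr rfl fun t ht => by rw [seenValue, if_pos (List.mem_toFinset.mp ht)]
    _ = ∑ t ∈ (nodes d n s).toFinset ∪ G.1.support, G.1 t * seenValue d n c x s t :=
        sum_subset subset_union_left fun t _ ht => by
          rw [seenValue, if_neg (List.mem_toFinset.not.mp ht), mul_zero]
    _ = ∑ t ∈ G.1.support, G.1 t * seenValue d n c x s t :=
        (sum_subset subset_union_right fun t _ ht => by
          rw [Finsupp.notMem_support_iff.mp ht, zero_mul]).symm

lemma prog_size (c₀ : ℝ) (s : ℕ) : (prog d n c c₀).size s = (nodes d n s).length := rfl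

lemma prog_factors (c₀ : ℝ) (s q : ℕ) : (prog d n c c₀).factors (s + 1) q
    = Prod.map (toAff d n s) (toAff d n s) (recipe d n c s ((nodes d n (s + 1)).getD q .acc)) :=
  rfl

lemma prog_depth (c₀ : ℝ) : (prog d n c c₀).depth = Nat.clog 2 n := rfl

lemma prog_out (c₀ : ℝ) :
    (prog d n c c₀).out = toAff d n (Nat.clog 2 n) (accForm c (stage d n (Nat.clog 2 n)), c₀) :=
  rfl

lemma val_prog (c₀ : ℝ) (s : ℕ) :
    ∀ j (hj : j < (nodes d n s).length),
      (prog d n c c₀).val x s j = nodeValue d n c x s (nodes d n s)[j] := by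
  induction s with
  | zero => intro j hj; simp [ProductNet.val, nodes, nodeValue, monomialEval]
  | succ s ih =>
    intro j hj
    rw [ProductNet.val_succ, prog_factors, prog_size, Prod.map_fst, Prod.map_snd,
      eval_toAff c x ih, eval_toAff c x ih, List.getD_eq_getElem _ _ hj]
    exact symEval_recipe c x (List.getElem_mem hj)

lemma out_eval_prog (c₀ : ℝ) :
    (prog d n c c₀).out.eval ((prog d n c c₀).size (prog d n c c₀).depth)
        ((prog d n c c₀).val x (prog d n c c₀).depth)
      = c₀ + ∑ α ∈ monomials d n, c α * monomialEval x α := by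
  have hlevel : ∀ α ∈ monomials d n, level α ≤ Nat.clog 2 n := fun α hα =>
    Nat.clog_mono_right 2 (mem_monomials.mp hα).2
  have hstage : stage d n (Nat.clog 2 n) = {α ∈ monomials d n | ¬ level α + 2 ≤ Nat.clog 2 n} :=
    filter_congr fun α hα => by have := hlevel α hα; omega
  rw [prog_depth, prog_out, prog_size, eval_toAff c x (val_prog c x c₀ _), symEval,
    linearCombination_accForm, seenValue_acc, ← sum_filter_add_sum_filter_not (monomials d n)
      (fun α => level α + 2 ≤ Nat.clog 2 n), ← hstage,
    sum_congr rfl fun α hα => by rw [seenValue_mono c x hα]]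
  simp only [nodeValue]
  ring

lemma nnz_toAff_le (s : ℕ) (G : (Node d →₀ ℝ) × ℝ) :
    (toAff d n s G).nnz (nodes d n s).length ≤ #G.1.support := by
  refine card_le_card_of_injOn (fun j => (nodes d n s).getD j .acc) (fun j hj => ?_) ?_
  · simpa [toAff] using (mem_filter.mp hj).2
  · intro j₁ hj₁ j₂ hj₂ h
    have hj₁ := mem_range.mp (mem_filter.mp hj₁).1
    have hj₂ := mem_range.mp (mem_filter.mp hj₂).1
    simp only [List.getD_eq_getElem _ _ hj₁, List.getD_eq_getElem _ _ hj₂] at h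
    exact (nodes_nodup s).getElem_inj_iff.mp h

lemma card_support_accForm_le (F : Finset (Fin d →₀ ℕ)) : #(accForm c F).support ≤ #F + 1 := by
  classical
  refine (card_le_card Finsupp.support_add).trans ((card_union_le _ _).trans ?_)
  have h₁ : #(single (Node.acc : Node d) (1 : ℝ)).support ≤ 1 :=
    (card_le_card Finsupp.support_single_subset).trans (card_singleton _).le
  have h₂ : #(∑ α ∈ F, c α • single (Node.mono α) (1 : ℝ)).support ≤ #F := by
    refine (card_le_card Finsupp.support_finsetSum).trans (card_biUnion_le.trans ?_)
    refine (sum_le_sum fun α _ => (card_le_card (Finsupp.support_smul.trans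
      Finsupp.support_single_subset)).trans (card_singleton _).le).trans ?_
    simp
  omega

lemma recipeCost_acc (s : ℕ) :
    recipeCost d n c s .acc ≤ #{α ∈ monomials d n | level α + 1 = s} + 2 := by
  have := card_support_accForm_le c {α ∈ monomials d n | level α + 1 = s}
  simp only [recipeCost, recipe, Finsupp.support_zero, card_empty]
  omega

lemma recipeCost_mono (s : ℕ) (α : Fin d →₀ ℕ) : recipeCost d n c s (.mono α) ≤ 3 := by
  have h₁ : ∀ t : Node d, #(single t (1 : ℝ)).support ≤ 1 := fun t =>
    (card_le_card Finsupp.support_single_subset).trans (card_singleton _).le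
  simp only [recipeCost, recipe]
  split_ifs
  · dsimp only
    have := h₁ (.mono α.half); have := h₁ (.mono (α - α.half)); omega
  · dsimp only
    have := h₁ (.mono α)
    simp only [Finsupp.support_zero, card_empty]
    omega

lemma stage_cost_le (c₀ : ℝ) (s : ℕ) :
    ∑ q ∈ range ((prog d n c c₀).size (s + 1)),
        (((prog d n c c₀).factors (s + 1) q).1.nnz ((prog d n c c₀).size s)
          + ((prog d n c c₀).factors (s + 1) q).2.nnz ((prog d n c c₀).size s) + 1)
      ≤ #{α ∈ monomials d n | level α + 1 = s} + 2 + 3 * #(stage d n (s + 1)) := by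
  simp only [prog_factors, prog_size, Prod.map_fst, Prod.map_snd]
  calc _ ≤ ∑ q ∈ range (nodes d n (s + 1)).length,
          recipeCost d n c s ((nodes d n (s + 1)).getD q .acc) :=
        sum_le_sum fun q _ => by
          have := nnz_toAff_le (d := d) (n := n) s
            (recipe d n c s ((nodes d n (s + 1)).getD q .acc)).1
          have := nnz_toAff_le (d := d) (n := n) s
            (recipe d n c s ((nodes d n (s + 1)).getD q .acc)).2
          rw [recipeCost]
          omega
    _ = recipeCost d n c s .acc + ∑ α ∈ stage d n (s + 1), recipeCost d n c s (.mono α) := by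
        rw [List.sum_range_getD, nodes, List.map_cons, List.sum_cons, List.map_map,
          ← sum_map_toList]
        rfl
    _ ≤ _ := by
        have := recipeCost_acc (d := d) (n := n) c s
        have := sum_le_sum fun α (_ : α ∈ stage d n (s + 1)) => recipeCost_mono (n := n) c s α
        simp only [sum_const, smul_eq_mul] at this
        omega

lemma cost_prog_le (c₀ : ℝ) :
    (prog d n c c₀).cost ≤ 8 * #(monomials d n) + 2 * Nat.clog 2 n + 2 := by
  have hacc : ∑ s ∈ range (Nat.clog 2 n), #{α ∈ monomials d n | level α + 1 = s}
      ≤ #(monomials d n) * 1 :=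
    sum_card_filter_le _ _ _ fun α _ =>
      card_le_one.mpr fun a ha b hb => by simp only [mem_filter] at ha hb; omega
  have hstage : ∑ s ∈ range (Nat.clog 2 n), #(stage d n (s + 1)) ≤ #(monomials d n) * 2 :=
    sum_card_filter_le _ _ (fun s α => level α ≤ s + 1 ∧ s + 1 ≤ level α + 1) fun α _ => by
      refine (card_le_card (t := {level α - 1, level α}) fun s hs => ?_).trans card_le_two
      simp only [mem_filter] at hs
      simp only [mem_insert, mem_singleton]
      omega
  have hout : (prog d n c c₀).out.nnz ((prog d n c c₀).size (Nat.clog 2 n))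
      ≤ #(stage d n (Nat.clog 2 n)) + 1 :=
    (nnz_toAff_le _ _).trans (card_support_accForm_le c _)
  have hJ : #(stage d n (Nat.clog 2 n)) ≤ #(monomials d n) := card_filter_le _ _
  have hsum := sum_le_sum fun s (_ : s ∈ range (Nat.clog 2 n)) => stage_cost_le (n := n) c c₀ s
  rw [sum_add_distrib, sum_add_distrib, sum_const, card_range, smul_eq_mul, ← mul_sum] at hsum
  rw [ProductNet.cost, prog_depth]
  omega

end Program

end PolyNet

/-- any `d`-variate polynomial of total degree at most `n` is realized by a
σ₂-network with at most `d⌊log₂ n⌋ + d` hidden layers and `O(binom(n+d,d))` neurons and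
nonzero weights. -/
theorem stmt_6 :
    ∃ C : ℕ, 0 < C ∧
      ∀ d : ℕ, 1 ≤ d → ∀ n : ℕ, 1 ≤ n →
        ∀ p : MvPolynomial (Fin d) ℝ, p.totalDegree ≤ n →
          ∃ Φ : Net,
            1 ≤ Φ.L ∧
            Φ.width 0 = d ∧
            Φ.width Φ.L = 1 ∧
            Φ.hiddenLayers ≤ d * Nat.log 2 n + d ∧
            Φ.neurons ≤ C * (n + d).choose d ∧
            Φ.nonzeroWeights ≤ C * (n + d).choose d ∧
            ∀ x : ℕ → ℝ, Φ.realize (repu 2) x 0 =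
              MvPolynomial.eval (fun i : Fin d => x i) p := by
  refine ⟨192, by norm_num, fun d hd n _ p hp => ?_⟩
  have hB : n + 1 ≤ (n + d).choose d := by
    rw [← Nat.choose_symm_add, ← Nat.choose_succ_self_right]
    exact Nat.choose_le_choose n (by omega)
  have hJ : Nat.clog 2 n ≤ n :=
    (Nat.clog_le_iff_le_pow (by norm_num)).mpr Nat.lt_two_pow_self.le
  have hcost : (PolyNet.prog d n (p.coeff ·) (p.coeff 0)).cost ≤ 12 * (n + d).choose d := by
    have := PolyNet.cost_prog_le (d := d) (n := n) (p.coeff ·) (p.coeff 0)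
    have := PolyNet.card_monomials_le d n
    omega
  refine ⟨(PolyNet.prog d n (p.coeff ·) (p.coeff 0)).toNet, Nat.le_add_left _ _, ?_,
    ProductNet.width_depth_succ _, ?_, (ProductNet.neurons_toNet_le _).trans (by omega),
    (ProductNet.nonzeroWeights_toNet_le _).trans (by omega), fun x => ?_⟩
  · rw [ProductNet.width_toNet_zero, PolyNet.prog_size, PolyNet.length_nodes_zero]
  · rw [ProductNet.hiddenLayers_toNet, PolyNet.prog_depth]
    have := Nat.clog_le_log_add_one (b := 2) (by norm_num) n
    have := Nat.le_mul_of_pos_left (Nat.log 2 n) hd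
    omega
  · rw [ProductNet.realize_toNet, PolyNet.out_eval_prog, PolyNet.eval_eq_sum_monomials p hp]
end
end

section
/- Let s ≥ 2 be an integer and let k be an integer with 1 ≤ k ≤ s − 1. (i) For every odd integer r ≥ 3 and all real x, T_{rs+k}(x) = 2 ∑_{j=3, j odd}^{r} ( T_{js}(x)·T_k(x) − T_{(j−1)s}(x)·T_{s−k}(x) ) + 2·T_s(x)·T_k(x) − T_{s−k}(x). (ii) For every even integer r ≥ 2 and all real x, T_{rs+k}(x) = 2 ∑_{j=2, j even}^{r} ( T_{js}(x)·T_k(x) − T_{(j−1)s}(x)·T_{s−k}(x) ) + T_k(x). -/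
/-!
By the product formula `2 T_m T_n = T_{m+n} + T_{m-n}`, both products in the summand
`2 (T_{js} T_k - T_{(j-1)s} T_{s-k})` contain `T_{js-k}`, which cancels and leaves
`T_{js+k} - T_{(j-2)s+k}`. Summing over `j` of fixed parity therefore telescopes to
`T_{rs+k} - T_{s+k}` for odd `r` and to `T_{rs+k} - T_k` for even `r`; for odd `r` the product
formula once more gives `T_{s+k} = 2 T_s T_k - T_{s-k}`.
-/

open scoped Classical

noncomputable section

open Polynomial Polynomial.Chebyshev Finset

theorem chebT_eq_eval_T (x : ℝ) : ∀ n : ℕ, chebT n x = (T ℝ n).eval x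
  | 0 => by simp [chebT]
  | 1 => by simp [chebT]
  | n + 2 => by
    rw [chebT, chebT_eq_eval_T x (n + 1), chebT_eq_eval_T x n]
    push_cast
    simp [T_add_two]

theorem two_mul_chebT_mul_chebT {m k : ℕ} (h : k ≤ m) (x : ℝ) :
    2 * chebT m x * chebT k x = chebT (m + k) x + chebT (m - k) x := by
  simpa [chebT_eq_eval_T, Nat.cast_sub h] using congrArg (eval x) (T_mul_T ℝ m k)

theorem two_mul_chebT_sub_chebT {s k j : ℕ} (hk : k ≤ s) (hj : 2 ≤ j) (x : ℝ) :
    2 * (chebT (j * s) x * chebT k x - chebT ((j - 1) * s) x * chebT (s - k) x) =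
      chebT (j * s + k) x - chebT ((j - 2) * s + k) x := by
  obtain ⟨i, rfl⟩ := Nat.exists_eq_add_of_le' hj
  have hjs : k ≤ (i + 2) * s := le_trans hk (Nat.le_mul_of_pos_left s (by omega))
  have hsk : s - k ≤ (i + 1) * s :=
    le_trans (Nat.sub_le s k) (Nat.le_mul_of_pos_left s (by omega))
  have h₁ := two_mul_chebT_mul_chebT hjs x
  have h₂ := two_mul_chebT_mul_chebT hsk x
  have e₁ : (i + 1) * s + (s - k) = (i + 2) * s - k := by
    zify [hk, hjs]; ring
  have e₂ : (i + 1) * s - (s - k) = i * s + k := by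
    zify [hk, hsk]; ring
  simp only [Nat.add_sub_cancel, show i + 2 - 1 = i + 1 by omega, e₁, e₂] at h₁ h₂ ⊢
  linarith

theorem sum_filter_Icc_telescope {M : Type*} [AddCommGroup M] {p : ℕ → Prop} [DecidablePred p]
    (hp : ∀ j, p (j + 1) ↔ ¬p j) {a : ℕ} (ha : p a) {f g : ℕ → M}
    (hg : ∀ j, a ≤ j → p j → g j = f j - f (j - 2)) (m : ℕ) :
    ∑ j ∈ (Icc a (a + 2 * m)).filter p, g j = f (a + 2 * m) - f (a - 2) := by
  have hp2 (j : ℕ) : p (j + 2) ↔ p j := by rw [hp, hp, not_not]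
  have hpa (m : ℕ) : p (a + 2 * m) := by
    induction m with
    | zero => exact ha
    | succ m ih => exact (hp2 _).2 ih
  induction m with
  | zero => simp [filter_singleton, ha, hg a le_rfl ha]
  | succ m ih =>
    have hpm := hpa m
    have hodd : ¬p (a + 2 * m + 1) := (hp _).1 <| by simpa [hp] using hpm
    rw [sum_filter] at ih ⊢
    rw [show a + 2 * (m + 1) = a + 2 * m + 1 + 1 by ring, sum_Icc_succ_top (by omega),
      sum_Icc_succ_top (by omega), ih, if_neg hodd, if_pos ((hp2 _).2 hpm),
      hg _ (by omega) ((hp2 _).2 hpm)]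
    simp only [add_zero, Nat.add_sub_cancel]
    abel

theorem stmt_12_general (s : ℕ) (k : ℕ) (hk2 : k ≤ s - 1) :
    (∀ r : ℕ, 3 ≤ r → Odd r → ∀ x : ℝ,
      chebT (r * s + k) x =
        2 * ∑ j ∈ (Finset.Icc 3 r).filter (fun j => Odd j),
              (chebT (j * s) x * chebT k x - chebT ((j - 1) * s) x * chebT (s - k) x)
          + 2 * chebT s x * chebT k x - chebT (s - k) x) ∧
    (∀ r : ℕ, 2 ≤ r → Even r → ∀ x : ℝ,
      chebT (r * s + k) x =
        2 * ∑ j ∈ (Finset.Icc 2 r).filter (fun j => Even j),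
              (chebT (j * s) x * chebT k x - chebT ((j - 1) * s) x * chebT (s - k) x)
          + chebT k x) := by
  have hk : k ≤ s := hk2.trans (Nat.sub_le s 1)
  have telescope {a : ℕ} (ha : 2 ≤ a) {p : ℕ → Prop} [DecidablePred p]
      (hp : ∀ j, p (j + 1) ↔ ¬p j) (hpa : p a) (m : ℕ) (x : ℝ) :=
    sum_filter_Icc_telescope hp hpa (f := fun j => chebT (j * s + k) x)
      (fun j hj _ => two_mul_chebT_sub_chebT hk (ha.trans hj) x) m
  refine ⟨fun r _ hodd x => ?_, fun r _ heven x => ?_⟩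
  · obtain ⟨m, rfl⟩ : ∃ m, r = 3 + 2 * m :=
      ⟨(r - 3) / 2, by obtain ⟨t, rfl⟩ := hodd; omega⟩
    rw [mul_sum, telescope (by norm_num) (fun _ => Nat.odd_add_one) (by decide),
      two_mul_chebT_mul_chebT hk x]
    norm_num
    ring
  · obtain ⟨m, rfl⟩ : ∃ m, r = 2 + 2 * m :=
      ⟨(r - 2) / 2, by obtain ⟨t, rfl⟩ := heven; omega⟩
    rw [mul_sum, telescope le_rfl (fun _ => Nat.even_add_one) (by decide)]
    norm_num

/-- odd/even telescoped expansions of `T_{rs+k}`. -/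
theorem stmt_12 (s : ℕ) (hs : 2 ≤ s) (k : ℕ) (hk1 : 1 ≤ k) (hk2 : k ≤ s - 1) :
    (∀ r : ℕ, 3 ≤ r → Odd r → ∀ x : ℝ,
      chebT (r * s + k) x =
        2 * ∑ j ∈ (Finset.Icc 3 r).filter (fun j => Odd j),
              (chebT (j * s) x * chebT k x - chebT ((j - 1) * s) x * chebT (s - k) x)
          + 2 * chebT s x * chebT k x - chebT (s - k) x) ∧
    (∀ r : ℕ, 2 ≤ r → Even r → ∀ x : ℝ,
      chebT (r * s + k) x =
        2 * ∑ j ∈ (Finset.Icc 2 r).filter (fun j => Even j),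
              (chebT (j * s) x * chebT k x - chebT ((j - 1) * s) x * chebT (s - k) x)
          + chebT k x) :=
  stmt_12_general s k hk2
end
end
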